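/- Let ρ be a critical radius function on ℝ^d and c₁, c₂ > 0 with c₁ > 2c₂. Then the uncentered exponential Hardy–Littlewood operator with rate c₁ is pointwise dominated by a constant times the centered one with rate c₂: for all f ∈ L¹_loc(ℝ^d) and x ∈ ℝ^d, ℳ_{ρ,c₁} f(x) ≤ C M_{ρ,c₂} f(x), where the constant C depends only on the critical radius constants. -/

import Mathlib

open MeasureTheory Metric Set

noncomputable section

/-- A critical radius function with constants `B₀, k₀`. -/
def IsCRF {d : ℕ} (ρ : EuclideanSpace ℝ (Fin d) → ℝ) (B₀ k₀ : ℝ) : Prop :=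
  (∀ x, 0 < ρ x) ∧ ∀ x y : EuclideanSpace ℝ (Fin d),
    B₀⁻¹ * ρ x * (1 + dist x y / ρ x) ^ (-k₀) ≤ ρ y ∧
    ρ y ≤ B₀ * ρ x * (1 + dist x y / ρ x) ^ (k₀ / (k₀ + 1))

/-- The Agmon distance associated to `ρ`. -/
def agmonDist {d : ℕ} (ρ : EuclideanSpace ℝ (Fin d) → ℝ)
    (x y : EuclideanSpace ℝ (Fin d)) : ℝ :=
  sInf { L : ℝ | ∃ γ : ℝ → EuclideanSpace ℝ (Fin d), ContDiff ℝ 1 γ ∧ γ 0 = x ∧ γ 1 = y ∧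
    L = ∫ t in (0:ℝ)..1, (ρ (γ t))⁻¹ * ‖deriv γ t‖ }

/-- The Agmon ball `B_ρ(x,r)`. -/
def agmonBall {d : ℕ} (ρ : EuclideanSpace ℝ (Fin d) → ℝ)
    (x : EuclideanSpace ℝ (Fin d)) (r : ℝ) : Set (EuclideanSpace ℝ (Fin d)) :=
  { y | agmonDist ρ x y < r }

open scoped ENNReal

/-- Centered exponential Hardy–Littlewood maximal operator `M_{ρ,c}`. -/
def aMax {d : ℕ} (ρ : EuclideanSpace ℝ (Fin d) → ℝ) (c : ℝ)
    (f : EuclideanSpace ℝ (Fin d) → ℝ) (x : EuclideanSpace ℝ (Fin d)) : ℝ≥0∞ :=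
  ⨆ (t : ℝ) (_ : 0 < t),
    (∫⁻ y in agmonBall ρ x t, ENNReal.ofReal |f y|) /
      (volume (agmonBall ρ x t) * ENNReal.ofReal (Real.exp (c * t)))

/-- Uncentered exponential Hardy–Littlewood maximal operator `ℳ_{ρ,c}`. -/
def aMaxUnc {d : ℕ} (ρ : EuclideanSpace ℝ (Fin d) → ℝ) (c : ℝ)
    (f : EuclideanSpace ℝ (Fin d) → ℝ) (x : EuclideanSpace ℝ (Fin d)) : ℝ≥0∞ :=
  ⨆ (z : EuclideanSpace ℝ (Fin d)) (r : ℝ) (_ : 0 < r) (_ : agmonDist ρ z x < r),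
    (∫⁻ y in agmonBall ρ z r, ENNReal.ofReal |f y|) /
      (volume (agmonBall ρ z r) * ENNReal.ofReal (Real.exp (c * r)))

/-!
If `x` lies in the Agmon ball `B(z, r)`, then `B(z, r) ⊆ B(x, 2r) ⊆ B(z, 3r)` by the triangle
inequality, so the theorem reduces to `|B(z, 3r)| e^{2 c₂ r} ≲ |B(z, r)| e^{c₁ r}`. Along a path
starting at `z`, the critical radius function stays comparable to `ρ(z)` as long as the path
remains in a Euclidean ball of radius `≈ ρ(z)`. Consequently the Euclidean ball of radius
`min(1, r / (2 B₀ 2^k₀)) ρ(z)` around `z` lies in `B(z, r)` (use the segment), while a path of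
Agmon length `< s` never leaves the Euclidean ball of radius `((1 + B₀ s)^(k₀+1) - 1) ρ(z)`
(look at its first exit time). Hence `|B(z, 3r)| / |B(z, r)|` grows at most polynomially in `r`,
which the factor `e^{(c₁ - 2c₂) r}` absorbs.

For the triangle inequality of the Agmon distance, two `C¹` paths are joined after reparametrising
each by the smoothstep `t²(3 - 2t)`, whose derivative vanishes at both ends.
-/

lemma one_add_rpow_sub_one_le {x p : ℝ} (hx : 0 ≤ x) (hp : 1 ≤ p) :
    (1 + x) ^ p - 1 ≤ p * x * (1 + x) ^ (p - 1) := by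
  have hx1 : 0 < 1 + x := by linarith
  have h := one_add_mul_self_le_rpow_one_add (s := -(x / (1 + x)))
    (by rw [neg_le_neg_iff, div_le_one hx1]; linarith) hp
  rw [show 1 + -(x / (1 + x)) = (1 + x)⁻¹ by field_simp; ring, Real.inv_rpow hx1.le] at h
  have hpow : 0 < (1 + x) ^ p := Real.rpow_pos_of_pos hx1 p
  have := mul_le_mul_of_nonneg_left h hpow.le
  rw [mul_inv_cancel₀ hpow.ne'] at this
  rw [Real.rpow_sub_one hx1.ne']
  linarith [show p * x * ((1 + x) ^ p / (1 + x)) = (1 + x) ^ p * (p * (x / (1 + x))) by ring]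

lemma rpow_le_mul_exp {M ε x : ℝ} (hM : 0 ≤ M) (hε : 0 < ε) (hx : 0 ≤ x) :
    x ^ M ≤ (M / ε) ^ M * Real.exp (ε * x) := by
  obtain rfl | hM := hM.eq_or_lt
  · simpa using Real.one_le_exp (by positivity)
  have ht : ε * x / M ≤ Real.exp (ε * x / M) := by linarith [Real.add_one_le_exp (ε * x / M)]
  calc x ^ M = (M / ε) ^ M * (ε * x / M) ^ M := by
        rw [← Real.mul_rpow (by positivity) (by positivity)]; congr 1; field_simp
    _ ≤ (M / ε) ^ M * Real.exp (ε * x / M) ^ M := by gcongr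
    _ = (M / ε) ^ M * Real.exp (ε * x) := by
        rw [← Real.exp_mul, div_mul_cancel₀ _ hM.ne']

def exitRadius (B₀ k₀ s : ℝ) : ℝ := (1 + B₀ * s) ^ (k₀ + 1) - 1

def innerRadius (B₀ k₀ r : ℝ) : ℝ := min 1 (r / (2 * (B₀ * 2 ^ k₀)))

lemma exitRadius_nonneg {B₀ k₀ s : ℝ} (hB₀ : 0 ≤ B₀) (hk₀ : 0 ≤ k₀) (hs : 0 ≤ s) :
    0 ≤ exitRadius B₀ k₀ s :=
  sub_nonneg.2 (Real.one_le_rpow (by nlinarith) (by linarith))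

lemma innerRadius_pos {B₀ k₀ r : ℝ} (hB₀ : 0 < B₀) (hr : 0 < r) : 0 < innerRadius B₀ k₀ r :=
  lt_min one_pos (by positivity)

lemma mul_rpow_one_add_exitRadius_le {B₀ k₀ s : ℝ} (hB₀ : 0 ≤ B₀) (hk₀ : 0 ≤ k₀) (hs : 0 ≤ s) :
    B₀ * s * (1 + exitRadius B₀ k₀ s) ^ (k₀ / (k₀ + 1)) ≤ exitRadius B₀ k₀ s := by
  have hb : 1 ≤ 1 + B₀ * s := by nlinarith
  rw [exitRadius, add_sub_cancel, ← Real.rpow_mul (by linarith),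
    mul_div_cancel₀ _ (by linarith : k₀ + 1 ≠ 0), Real.rpow_add_one (by linarith)]
  nlinarith [Real.one_le_rpow hb hk₀]

lemma exitRadius_div_innerRadius_le {B₀ k₀ r : ℝ} (hB₀ : 1 ≤ B₀) (hk₀ : 0 ≤ k₀) (hr : 0 < r) :
    exitRadius B₀ k₀ (3 * r) / innerRadius B₀ k₀ r ≤
      (k₀ + 1) * (3 * B₀) * (1 + 3 * B₀) ^ k₀ * (2 * (B₀ * 2 ^ k₀)) * (1 + r) ^ (k₀ + 1) := by
  set A := 2 * (B₀ * 2 ^ k₀)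
  set K := (k₀ + 1) * (3 * B₀) * (1 + 3 * B₀) ^ k₀
  set P := (1 + r) ^ k₀
  have hA : 1 ≤ A := by have := Real.one_le_rpow one_le_two hk₀; nlinarith
  have hR : exitRadius B₀ k₀ (3 * r) ≤ K * P * r :=
    calc exitRadius B₀ k₀ (3 * r)
        ≤ (k₀ + 1) * (B₀ * (3 * r)) * (1 + B₀ * (3 * r)) ^ (k₀ + 1 - 1) :=
          one_add_rpow_sub_one_le (by positivity) (by linarith)
      _ ≤ (k₀ + 1) * (B₀ * (3 * r)) * ((1 + 3 * B₀) * (1 + r)) ^ k₀ := by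
          rw [add_sub_cancel_right]; gcongr; nlinarith
      _ = K * P * r := by rw [Real.mul_rpow (by positivity) (by positivity)]; ring
  rw [div_le_iff₀ (innerRadius_pos (by linarith) hr), innerRadius,
    Real.rpow_add_one (show 1 + r ≠ 0 by positivity) k₀, mul_min_of_nonneg _ _ (by positivity)]
  refine hR.trans (le_min ?_ ?_)
  · calc K * P * r ≤ K * P * (A * (1 + r)) := by gcongr; nlinarith
      _ = K * A * (P * (1 + r)) * 1 := by ring
  · calc K * P * r ≤ K * P * r * (1 + r) := le_mul_of_one_le_right (by positivity) (by linarith)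
      _ = K * A * (P * (1 + r)) * (r / A) := by field_simp

lemma Continuous.exists_first_le {u : ℝ → ℝ} (hu : Continuous u) {a : ℝ} (h : a ≤ u 1) :
    ∃ T ∈ Icc (0:ℝ) 1, a ≤ u T ∧ ∀ t ∈ Ioo 0 T, u t < a := by
  set S := {t ∈ Icc (0:ℝ) 1 | a ≤ u t}
  have hS : BddBelow S := ⟨0, fun t ht => ht.1.1⟩
  have hT : sInf S ∈ S :=
    (isClosed_Icc.inter (isClosed_le continuous_const hu)).csInf_mem ⟨1, by simp, h⟩ hS
  refine ⟨sInf S, hT.1, hT.2, fun t ht => ?_⟩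
  by_contra! h'
  exact notMem_of_lt_csInf ht.2 hS ⟨⟨ht.1.le, ht.2.le.trans hT.1.2⟩, h'⟩

def smoothstep (t : ℝ) : ℝ := t ^ 2 * (3 - 2 * t)

lemma hasDerivAt_smoothstep (t : ℝ) : HasDerivAt smoothstep (6 * t * (1 - t)) t :=
  ((hasDerivAt_pow 2 t).mul (((hasDerivAt_id' t).const_mul 2).const_sub 3)).congr_deriv
    (by norm_num; ring)

lemma contDiff_smoothstep : ContDiff ℝ 1 smoothstep := by
  unfold smoothstep; fun_prop

lemma smoothstep_zero : smoothstep 0 = 0 := by norm_num [smoothstep]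

lemma smoothstep_one : smoothstep 1 = 1 := by norm_num [smoothstep]

lemma strictMonoOn_smoothstep : StrictMonoOn smoothstep (Icc 0 1) := by
  refine strictMonoOn_of_deriv_pos (convex_Icc 0 1) contDiff_smoothstep.continuous.continuousOn
    fun t ht => ?_
  rw [interior_Icc] at ht
  rw [(hasDerivAt_smoothstep t).deriv]
  have := mul_pos ht.1 (sub_pos.2 ht.2)
  linarith

lemma smoothstep_image_Ioo : smoothstep '' Ioo 0 1 = Ioo 0 1 := by
  refine Subset.antisymm ?_ ?_
  · rintro _ ⟨t, ht, rfl⟩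
    rw [← smoothstep_zero, ← smoothstep_one]
    exact ⟨strictMonoOn_smoothstep ⟨le_rfl, zero_le_one⟩ (Ioo_subset_Icc_self ht) ht.1,
      strictMonoOn_smoothstep (Ioo_subset_Icc_self ht) ⟨zero_le_one, le_rfl⟩ ht.2⟩
  · simpa [smoothstep_zero, smoothstep_one] using
      intermediate_value_Ioo zero_le_one contDiff_smoothstep.continuous.continuousOn

lemma integral_comp_smoothstep (F : ℝ → ℝ) :
    ∫ s in (0:ℝ)..1, 6 * s * (1 - s) * F (smoothstep s) = ∫ s in (0:ℝ)..1, F s := by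
  have h := integral_image_eq_integral_abs_deriv_smul measurableSet_Ioo
    (fun s _ => (hasDerivAt_smoothstep s).hasDerivWithinAt)
    (strictMonoOn_smoothstep.injOn.mono Ioo_subset_Icc_self) F
  rw [smoothstep_image_Ioo] at h
  simp only [intervalIntegral.integral_of_le zero_le_one, integral_Ioc_eq_integral_Ioo, h]
  refine setIntegral_congr_fun measurableSet_Ioo fun s hs => ?_
  rw [abs_of_nonneg (mul_pos (by linarith [hs.1]) (sub_pos.2 hs.2)).le, smul_eq_mul]

def pathJoin {X : Type*} (γ₁ γ₂ : ℝ → X) (t : ℝ) : X :=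
  if t ≤ 1 / 2 then γ₁ (2 * t) else γ₂ (2 * t - 1)

lemma Continuous.pathJoin {X : Type*} [TopologicalSpace X] {γ₁ γ₂ : ℝ → X}
    (h₁ : Continuous γ₁) (h₂ : Continuous γ₂) (h : γ₁ 1 = γ₂ 0) :
    Continuous (pathJoin γ₁ γ₂) :=
  Continuous.if_le (by fun_prop) (by fun_prop) continuous_id continuous_const
    fun t ht => by simp [ht, h]

lemma integral_pathJoin {f₁ f₂ : ℝ → ℝ} (h : IntervalIntegrable (pathJoin f₁ f₂) volume 0 1) :
    ∫ t in (0:ℝ)..1, pathJoin f₁ f₂ t = ((∫ t in (0:ℝ)..1, f₁ t) + ∫ t in (0:ℝ)..1, f₂ t) / 2 := by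
  have hleft : ∫ t in (0:ℝ)..1 / 2, pathJoin f₁ f₂ t = (∫ t in (0:ℝ)..1, f₁ t) / 2 := by
    have : EqOn (pathJoin f₁ f₂) (fun t => f₁ (2 * t)) (uIcc 0 (1 / 2)) := fun t ht =>
      if_pos (by rw [uIcc_of_le (by norm_num)] at ht; exact ht.2)
    rw [intervalIntegral.integral_congr this]
    simp [intervalIntegral.integral_comp_mul_left f₁ two_ne_zero, div_eq_inv_mul]
  have hright : ∫ t in (1 / 2 : ℝ)..1, pathJoin f₁ f₂ t = (∫ t in (0:ℝ)..1, f₂ t) / 2 := by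
    have : ∀ t ∈ uIoc (1 / 2 : ℝ) 1, pathJoin f₁ f₂ t = f₂ (2 * t - 1) := fun t ht =>
      if_neg (by rw [uIoc_of_le (by norm_num)] at ht; exact not_le.2 ht.1)
    rw [intervalIntegral.integral_congr_ae (.of_forall this)]
    norm_num [intervalIntegral.integral_comp_mul_sub f₂ two_ne_zero, div_eq_inv_mul]
  have hsub : ∀ {a b : ℝ}, 0 ≤ a → a ≤ b → b ≤ 1 →
      IntervalIntegrable (pathJoin f₁ f₂) volume a b := fun ha hab hb => h.mono_set (by
    rw [uIcc_of_le hab, uIcc_of_le zero_le_one]; exact Icc_subset_Icc ha hb)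
  rw [← intervalIntegral.integral_add_adjacent_intervals (b := 1 / 2)
    (hsub le_rfl (by norm_num) (by norm_num)) (hsub (by norm_num) (by norm_num) le_rfl),
    hleft, hright, add_div]

section Paths

variable {E : Type*} [NormedAddCommGroup E] [NormedSpace ℝ E] {ρ : E → ℝ} {γ γ₁ γ₂ : ℝ → E}

def agmonLength (ρ : E → ℝ) (γ : ℝ → E) : ℝ :=
  ∫ t in (0:ℝ)..1, (ρ (γ t))⁻¹ * ‖deriv γ t‖

lemma agmonLength_nonneg (hρ : 0 ≤ ρ) (γ : ℝ → E) : 0 ≤ agmonLength ρ γ :=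
  intervalIntegral.integral_nonneg zero_le_one fun _ _ =>
    mul_nonneg (inv_nonneg.2 (hρ _)) (norm_nonneg _)

lemma agmonLength_comp_one_sub (ρ : E → ℝ) (γ : ℝ → E) :
    agmonLength ρ (fun t => γ (1 - t)) = agmonLength ρ γ := by
  simp only [agmonLength, deriv_comp_const_sub, norm_neg]
  simpa using intervalIntegral.integral_comp_sub_left (a := 0) (b := 1)
    (fun t => (ρ (γ t))⁻¹ * ‖deriv γ t‖) 1

lemma ContDiff.norm_sub_le_integral_norm_deriv [CompleteSpace E] (hγ : ContDiff ℝ 1 γ) {a b : ℝ}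
    (hab : a ≤ b) : ‖γ b - γ a‖ ≤ ∫ t in a..b, ‖deriv γ t‖ := by
  rw [← intervalIntegral.integral_deriv_eq_sub (fun t _ => hγ.differentiable one_ne_zero t)
    ((hγ.continuous_deriv le_rfl).intervalIntegrable a b)]
  exact intervalIntegral.norm_integral_le_integral_norm hab

lemma norm_sub_le_mul_agmonLength [CompleteSpace E] (hρ : ∀ x, 0 < ρ x) (hγ : ContDiff ℝ 1 γ)
    (hint : IntervalIntegrable (fun t => (ρ (γ t))⁻¹ * ‖deriv γ t‖) volume 0 1) {T c : ℝ}
    (hT : T ∈ Icc (0:ℝ) 1) (hc₀ : 0 ≤ c) (hc : ∀ t ∈ Ioo 0 T, ρ (γ t) ≤ c) :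
    ‖γ T - γ 0‖ ≤ c * agmonLength ρ γ := by
  set g := fun t => (ρ (γ t))⁻¹ * ‖deriv γ t‖
  have hg : 0 ≤ g := fun t => mul_nonneg (inv_nonneg.2 (hρ _).le) (norm_nonneg _)
  have hder : ∀ t ∈ Ioo 0 T, ‖deriv γ t‖ ≤ c * g t := fun t ht =>
    calc ‖deriv γ t‖ = ρ (γ t) * g t := by
          simp only [g]; rw [← mul_assoc, mul_inv_cancel₀ (hρ _).ne', one_mul]
      _ ≤ c * g t := mul_le_mul_of_nonneg_right (hc t ht) (hg t)
  have hgT : IntervalIntegrable g volume 0 T := hint.mono_set (by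
    rw [uIcc_of_le hT.1, uIcc_of_le zero_le_one]; exact Icc_subset_Icc_right hT.2)
  calc ‖γ T - γ 0‖ ≤ ∫ t in (0:ℝ)..T, ‖deriv γ t‖ := hγ.norm_sub_le_integral_norm_deriv hT.1
    _ ≤ ∫ t in (0:ℝ)..T, c * g t := intervalIntegral.integral_mono_on_of_le_Ioo hT.1
          ((hγ.continuous_deriv le_rfl).norm.intervalIntegrable 0 T) (hgT.const_mul c) hder
    _ = c * ∫ t in (0:ℝ)..T, g t := intervalIntegral.integral_const_mul c g
    _ ≤ c * agmonLength ρ γ := by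
          gcongr
          exact intervalIntegral.integral_mono_interval le_rfl hT.1 hT.2 (.of_forall hg) hint

lemma deriv_comp_smoothstep (hγ : Differentiable ℝ γ) (t : ℝ) :
    deriv (γ ∘ smoothstep) t = (6 * t * (1 - t)) • deriv γ (smoothstep t) := by
  rw [deriv.scomp t (hγ _) (hasDerivAt_smoothstep t).differentiableAt,
    (hasDerivAt_smoothstep t).deriv]

lemma deriv_comp_smoothstep_zero (hγ : Differentiable ℝ γ) : deriv (γ ∘ smoothstep) 0 = 0 := by
  simp [deriv_comp_smoothstep hγ]

lemma deriv_comp_smoothstep_one (hγ : Differentiable ℝ γ) : deriv (γ ∘ smoothstep) 1 = 0 := by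
  simp [deriv_comp_smoothstep hγ]

lemma agmonLength_comp_smoothstep (hγ : Differentiable ℝ γ) :
    agmonLength ρ (γ ∘ smoothstep) = agmonLength ρ γ := by
  refine Eq.trans ?_ (integral_comp_smoothstep fun t => (ρ (γ t))⁻¹ * ‖deriv γ t‖)
  refine intervalIntegral.integral_congr fun s hs => ?_
  rw [uIcc_of_le zero_le_one] at hs
  have : 0 ≤ 6 * s * (1 - s) := mul_nonneg (by linarith [hs.1]) (sub_nonneg.2 hs.2)
  simp only [Function.comp_apply, deriv_comp_smoothstep hγ, norm_smul, Real.norm_of_nonneg this]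
  ring

lemma hasDerivAt_pathJoin (hγ₁ : ContDiff ℝ 1 γ₁) (hγ₂ : ContDiff ℝ 1 γ₂) (h : γ₁ 1 = γ₂ 0)
    (h₁ : deriv γ₁ 1 = 0) (h₂ : deriv γ₂ 0 = 0) (t : ℝ) :
    HasDerivAt (pathJoin γ₁ γ₂)
      (pathJoin (fun s => (2:ℝ) • deriv γ₁ s) (fun s => (2:ℝ) • deriv γ₂ s) t) t := by
  have hd₁ : ∀ t, HasDerivAt (fun u => γ₁ (2 * u)) ((2:ℝ) • deriv γ₁ (2 * t)) t := fun t => by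
    simpa [Function.comp_def] using ((hγ₁.differentiable one_ne_zero _).hasDerivAt.scomp t
      ((hasDerivAt_id t).const_mul 2))
  have hd₂ : ∀ t, HasDerivAt (fun u => γ₂ (2 * u - 1)) ((2:ℝ) • deriv γ₂ (2 * t - 1)) t :=
    fun t => by
      simpa [Function.comp_def] using ((hγ₂.differentiable one_ne_zero _).hasDerivAt.scomp t
        (((hasDerivAt_id t).const_mul 2).sub_const 1))
  have off : ∀ t ≠ 1 / 2, HasDerivAt (pathJoin γ₁ γ₂)
      (pathJoin (fun s => (2:ℝ) • deriv γ₁ s) (fun s => (2:ℝ) • deriv γ₂ s) t) t := by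
    intro t ht
    rcases ht.lt_or_gt with ht | ht
    · rw [pathJoin, if_pos ht.le]
      exact (hd₁ t).congr_of_eventuallyEq
        (Filter.eventually_of_mem (Iio_mem_nhds ht) fun u hu => if_pos (le_of_lt hu))
    · rw [pathJoin, if_neg (not_le.2 ht)]
      exact (hd₂ t).congr_of_eventuallyEq
        (Filter.eventually_of_mem (Ioi_mem_nhds ht) fun u hu => if_neg (not_le.2 hu))
  obtain rfl | ht := eq_or_ne t (1 / 2)
  · refine hasDerivAt_of_hasDerivAt_of_ne off
      (hγ₁.continuous.pathJoin hγ₂.continuous h).continuousAt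
      (Continuous.continuousAt (Continuous.pathJoin ?_ ?_ (by simp [h₁, h₂])))
    all_goals exact continuous_const.smul (ContDiff.continuous_deriv ‹_› le_rfl)
  · exact off t ht

lemma deriv_pathJoin (hγ₁ : ContDiff ℝ 1 γ₁) (hγ₂ : ContDiff ℝ 1 γ₂) (h : γ₁ 1 = γ₂ 0)
    (h₁ : deriv γ₁ 1 = 0) (h₂ : deriv γ₂ 0 = 0) :
    deriv (pathJoin γ₁ γ₂) = pathJoin (fun s => (2:ℝ) • deriv γ₁ s) (fun s => (2:ℝ) • deriv γ₂ s) :=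
  funext fun t => (hasDerivAt_pathJoin hγ₁ hγ₂ h h₁ h₂ t).deriv

lemma contDiff_pathJoin (hγ₁ : ContDiff ℝ 1 γ₁) (hγ₂ : ContDiff ℝ 1 γ₂) (h : γ₁ 1 = γ₂ 0)
    (h₁ : deriv γ₁ 1 = 0) (h₂ : deriv γ₂ 0 = 0) :
    ContDiff ℝ 1 (pathJoin γ₁ γ₂) := by
  refine contDiff_one_iff_deriv.2
    ⟨fun t => (hasDerivAt_pathJoin hγ₁ hγ₂ h h₁ h₂ t).differentiableAt, ?_⟩
  rw [deriv_pathJoin hγ₁ hγ₂ h h₁ h₂]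
  exact Continuous.pathJoin (continuous_const.smul (hγ₁.continuous_deriv le_rfl))
    (continuous_const.smul (hγ₂.continuous_deriv le_rfl)) (by simp [h₁, h₂])

lemma agmonLength_pathJoin_le (hρ : 0 ≤ ρ) (hγ₁ : ContDiff ℝ 1 γ₁) (hγ₂ : ContDiff ℝ 1 γ₂)
    (h : γ₁ 1 = γ₂ 0) (h₁ : deriv γ₁ 1 = 0) (h₂ : deriv γ₂ 0 = 0) :
    agmonLength ρ (pathJoin γ₁ γ₂) ≤ agmonLength ρ γ₁ + agmonLength ρ γ₂ := by
  have hF : (fun t => (ρ (pathJoin γ₁ γ₂ t))⁻¹ * ‖deriv (pathJoin γ₁ γ₂) t‖) =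
      pathJoin (fun s => 2 * ((ρ (γ₁ s))⁻¹ * ‖deriv γ₁ s‖))
        (fun s => 2 * ((ρ (γ₂ s))⁻¹ * ‖deriv γ₂ s‖)) := by
    funext t
    rw [deriv_pathJoin hγ₁ hγ₂ h h₁ h₂]
    unfold pathJoin
    split_ifs <;> simp only [norm_smul, Real.norm_two] <;> ring
  rw [agmonLength, hF]
  by_cases hI : IntervalIntegrable (pathJoin (fun s => 2 * ((ρ (γ₁ s))⁻¹ * ‖deriv γ₁ s‖))
      (fun s => 2 * ((ρ (γ₂ s))⁻¹ * ‖deriv γ₂ s‖))) volume 0 1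
  · rw [integral_pathJoin hI, intervalIntegral.integral_const_mul,
      intervalIntegral.integral_const_mul]
    exact le_of_eq (by unfold agmonLength; ring)
  · rw [intervalIntegral.integral_undef hI]
    exact add_nonneg (agmonLength_nonneg hρ _) (agmonLength_nonneg hρ _)

end Paths

section AgmonDist

variable {d : ℕ} {ρ : EuclideanSpace ℝ (Fin d) → ℝ} {x y z : EuclideanSpace ℝ (Fin d)}

lemma agmonLengths_nonempty (ρ : EuclideanSpace ℝ (Fin d) → ℝ) (x y : EuclideanSpace ℝ (Fin d)) :
    {L | ∃ γ : ℝ → EuclideanSpace ℝ (Fin d), ContDiff ℝ 1 γ ∧ γ 0 = x ∧ γ 1 = y ∧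
      L = agmonLength ρ γ}.Nonempty :=
  ⟨_, fun t => x + t • (y - x), by fun_prop, by simp, by simp, rfl⟩

lemma agmonDist_le_agmonLength (hρ : 0 ≤ ρ) {γ : ℝ → EuclideanSpace ℝ (Fin d)}
    (hγ : ContDiff ℝ 1 γ) (h0 : γ 0 = x) (h1 : γ 1 = y) : agmonDist ρ x y ≤ agmonLength ρ γ :=
  csInf_le ⟨0, by rintro _ ⟨γ, -, -, -, rfl⟩; exact agmonLength_nonneg hρ γ⟩ ⟨γ, hγ, h0, h1, rfl⟩

lemma le_agmonDist {a : ℝ} (h : ∀ γ : ℝ → EuclideanSpace ℝ (Fin d), ContDiff ℝ 1 γ → γ 0 = x →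
    γ 1 = y → a ≤ agmonLength ρ γ) : a ≤ agmonDist ρ x y :=
  le_csInf (agmonLengths_nonempty ρ x y) fun _ ⟨γ, hγ, h0, h1, hL⟩ => hL ▸ h γ hγ h0 h1

lemma exists_agmonLength_lt {s : ℝ} (h : agmonDist ρ x y < s) :
    ∃ γ : ℝ → EuclideanSpace ℝ (Fin d), ContDiff ℝ 1 γ ∧ γ 0 = x ∧ γ 1 = y ∧
      agmonLength ρ γ < s := by
  obtain ⟨_, ⟨γ, hγ, h0, h1, rfl⟩, hs⟩ := exists_lt_of_csInf_lt (agmonLengths_nonempty ρ x y) h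
  exact ⟨γ, hγ, h0, h1, hs⟩

lemma agmonDist_comm (hρ : 0 ≤ ρ) (x y : EuclideanSpace ℝ (Fin d)) :
    agmonDist ρ x y = agmonDist ρ y x := by
  have key : ∀ x y : EuclideanSpace ℝ (Fin d), agmonDist ρ y x ≤ agmonDist ρ x y :=
    fun x y => le_agmonDist fun γ hγ h0 h1 => by
      rw [← agmonLength_comp_one_sub]
      exact agmonDist_le_agmonLength hρ (hγ.comp (contDiff_const.sub contDiff_id))
        (by simpa using h1) (by simpa using h0)
  exact le_antisymm (key y x) (key x y)

lemma agmonDist_le_add_agmonLength (hρ : 0 ≤ ρ) {γ₁ γ₂ : ℝ → EuclideanSpace ℝ (Fin d)}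
    (hγ₁ : ContDiff ℝ 1 γ₁) (hγ₂ : ContDiff ℝ 1 γ₂) (h₀ : γ₁ 0 = x) (h : γ₁ 1 = z)
    (h' : γ₂ 0 = z) (h₁ : γ₂ 1 = y) :
    agmonDist ρ x y ≤ agmonLength ρ γ₁ + agmonLength ρ γ₂ := by
  have hd₁ := hγ₁.differentiable one_ne_zero
  have hd₂ := hγ₂.differentiable one_ne_zero
  have hc₁ := hγ₁.comp contDiff_smoothstep
  have hc₂ := hγ₂.comp contDiff_smoothstep
  have hj : (γ₁ ∘ smoothstep) 1 = (γ₂ ∘ smoothstep) 0 := by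
    simp [smoothstep_zero, smoothstep_one, h, h']
  have e₁ := deriv_comp_smoothstep_one hd₁
  have e₂ := deriv_comp_smoothstep_zero hd₂
  calc agmonDist ρ x y ≤ agmonLength ρ (pathJoin (γ₁ ∘ smoothstep) (γ₂ ∘ smoothstep)) :=
        agmonDist_le_agmonLength hρ (contDiff_pathJoin hc₁ hc₂ hj e₁ e₂)
          (by simp [pathJoin, smoothstep_zero, h₀]) (by norm_num [pathJoin, smoothstep_one, h₁])
    _ ≤ agmonLength ρ (γ₁ ∘ smoothstep) + agmonLength ρ (γ₂ ∘ smoothstep) :=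
        agmonLength_pathJoin_le hρ hc₁ hc₂ hj e₁ e₂
    _ = agmonLength ρ γ₁ + agmonLength ρ γ₂ := by
        rw [agmonLength_comp_smoothstep hd₁, agmonLength_comp_smoothstep hd₂]

lemma agmonDist_triangle (hρ : 0 ≤ ρ) (x z y : EuclideanSpace ℝ (Fin d)) :
    agmonDist ρ x y ≤ agmonDist ρ x z + agmonDist ρ z y := by
  have h : ∀ γ₁ : ℝ → EuclideanSpace ℝ (Fin d), ContDiff ℝ 1 γ₁ → γ₁ 0 = x → γ₁ 1 = z →
      agmonDist ρ x y - agmonLength ρ γ₁ ≤ agmonDist ρ z y := fun γ₁ hγ₁ h₀ h =>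
    le_agmonDist fun γ₂ hγ₂ h' h₁ => by
      linarith [agmonDist_le_add_agmonLength hρ hγ₁ hγ₂ h₀ h h' h₁]
  have : agmonDist ρ x y - agmonDist ρ z y ≤ agmonDist ρ x z :=
    le_agmonDist fun γ₁ hγ₁ h₀ h₁ => by linarith [h γ₁ hγ₁ h₀ h₁]
  linarith

lemma agmonBall_subset_agmonBall (hρ : 0 ≤ ρ) {r s : ℝ} (h : agmonDist ρ x z + r ≤ s) :
    agmonBall ρ z r ⊆ agmonBall ρ x s := fun y hy => by
  have : agmonDist ρ z y < r := hy
  show agmonDist ρ x y < s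
  linarith [agmonDist_triangle hρ x z y]

end AgmonDist

section CriticalRadius

variable {d : ℕ} {ρ : EuclideanSpace ℝ (Fin d) → ℝ} {B₀ k₀ : ℝ} {x y z : EuclideanSpace ℝ (Fin d)}

lemma IsCRF.nonneg (hρ : IsCRF ρ B₀ k₀) : 0 ≤ ρ := fun x => (hρ.1 x).le

lemma IsCRF.one_le (hρ : IsCRF ρ B₀ k₀) : 1 ≤ B₀ := by
  have h := (hρ.2 0 0).2
  simp only [dist_self, zero_div, add_zero, Real.one_rpow, mul_one] at h
  exact (le_mul_iff_one_le_left (hρ.1 0)).1 h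

lemma IsCRF.div_le_of_dist_le (hρ : IsCRF ρ B₀ k₀) (hk₀ : 0 ≤ k₀) (h : dist x y ≤ ρ x) :
    ρ x / (B₀ * 2 ^ k₀) ≤ ρ y := by
  have hx := hρ.1 x
  have hu : dist x y / ρ x ≤ 1 := (div_le_one hx).2 h
  have hpow : (2:ℝ) ^ (-k₀) ≤ (1 + dist x y / ρ x) ^ (-k₀) :=
    Real.rpow_le_rpow_of_nonpos (by positivity) (by linarith) (by linarith)
  calc ρ x / (B₀ * 2 ^ k₀) = B₀⁻¹ * ρ x * (2:ℝ) ^ (-k₀) := by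
        rw [Real.rpow_neg zero_le_two]; field_simp
    _ ≤ B₀⁻¹ * ρ x * (1 + dist x y / ρ x) ^ (-k₀) := by
        have := hρ.one_le; gcongr
    _ ≤ ρ y := (hρ.2 x y).1

lemma IsCRF.le_of_dist_le (hρ : IsCRF ρ B₀ k₀) (hk₀ : 0 ≤ k₀) {R : ℝ} (h : dist x y ≤ R * ρ x) :
    ρ y ≤ B₀ * ρ x * (1 + R) ^ (k₀ / (k₀ + 1)) := by
  have hx := hρ.1 x
  refine (hρ.2 x y).2.trans ?_
  have : dist x y / ρ x ≤ R := (div_le_iff₀ hx).2 h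
  have := hρ.one_le
  gcongr

lemma IsCRF.closedBall_subset_agmonBall (hρ : IsCRF ρ B₀ k₀) (hk₀ : 0 ≤ k₀) {r : ℝ} (hr : 0 < r) :
    closedBall z (innerRadius B₀ k₀ r * ρ z) ⊆ agmonBall ρ z r := by
  intro y hy
  have hz := hρ.1 z
  have hB₀ : 0 < B₀ := zero_lt_one.trans_le hρ.one_le
  have hA : 0 < B₀ * 2 ^ k₀ := by positivity
  have hyz : ‖y - z‖ ≤ r / (2 * (B₀ * 2 ^ k₀)) * ρ z ∧ ‖y - z‖ ≤ ρ z := by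
    rw [mem_closedBall, dist_eq_norm, innerRadius] at hy
    exact ⟨hy.trans (by gcongr; exact min_le_right _ _),
      hy.trans (mul_le_of_le_one_left hz.le (min_le_left _ _))⟩
  have hbound : ∀ t ∈ uIoc (0:ℝ) 1,
      ‖(ρ (z + t • (y - z)))⁻¹ * ‖deriv (fun t : ℝ => z + t • (y - z)) t‖‖ ≤ r / 2 := by
    intro t ht
    rw [uIoc_of_le zero_le_one] at ht
    have hdist : dist z (z + t • (y - z)) ≤ ρ z := by
      rw [dist_eq_norm, sub_add_cancel_left, norm_neg, norm_smul, Real.norm_of_nonneg ht.1.le]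
      exact (mul_le_of_le_one_left (norm_nonneg _) ht.2).trans hyz.2
    have hlow := hρ.div_le_of_dist_le hk₀ hdist
    have hderiv : deriv (fun t : ℝ => z + t • (y - z)) t = y - z := by
      simp [deriv_smul_const]
    rw [hderiv, norm_mul, norm_inv, norm_norm, Real.norm_of_nonneg (hρ.1 _).le]
    calc (ρ (z + t • (y - z)))⁻¹ * ‖y - z‖
        ≤ (ρ z / (B₀ * 2 ^ k₀))⁻¹ * (r / (2 * (B₀ * 2 ^ k₀)) * ρ z) :=
          mul_le_mul (inv_anti₀ (by positivity) hlow) hyz.1 (norm_nonneg _) (by positivity)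
      _ = r / 2 := by field_simp
  have hlen : agmonLength ρ (fun t : ℝ => z + t • (y - z)) ≤ r / 2 :=
    (le_abs_self _).trans
      (by simpa [agmonLength] using intervalIntegral.norm_integral_le_of_norm_le_const hbound)
  show agmonDist ρ z y < r
  linarith [agmonDist_le_agmonLength hρ.nonneg (x := z) (y := y)
    (γ := fun t : ℝ => z + t • (y - z)) (by fun_prop) (by simp) (by simp)]

lemma IsCRF.norm_sub_le_of_agmonLength_lt (hρ : IsCRF ρ B₀ k₀) (hk₀ : 0 ≤ k₀)
    {γ : ℝ → EuclideanSpace ℝ (Fin d)} (hγ : ContDiff ℝ 1 γ) (h0 : γ 0 = z)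
    (hint : IntervalIntegrable (fun t => (ρ (γ t))⁻¹ * ‖deriv γ t‖) volume 0 1) {s : ℝ}
    (hs : agmonLength ρ γ < s) : ‖γ 1 - z‖ ≤ exitRadius B₀ k₀ s * ρ z := by
  set R := exitRadius B₀ k₀ s
  set c := B₀ * ρ z * (1 + R) ^ (k₀ / (k₀ + 1))
  have hB₀ : 0 < B₀ := zero_lt_one.trans_le hρ.one_le
  have hs0 : 0 ≤ s := (agmonLength_nonneg hρ.nonneg γ).trans hs.le
  have h1R : 0 < 1 + R := by linarith [exitRadius_nonneg hB₀.le hk₀ hs0]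
  have hc : 0 < c := mul_pos (mul_pos hB₀ (hρ.1 z)) (Real.rpow_pos_of_pos h1R _)
  by_contra! hout
  obtain ⟨T, hT, hRT, hbefore⟩ :=
    (hγ.continuous.sub continuous_const).norm.exists_first_le hout.le
  have hρc : ∀ t ∈ Ioo 0 T, ρ (γ t) ≤ c := fun t ht => hρ.le_of_dist_le hk₀
    (by rw [dist_comm, dist_eq_norm]; exact (hbefore t ht).le)
  have := calc R * ρ z ≤ ‖γ T - γ 0‖ := h0 ▸ hRT
    _ ≤ c * agmonLength ρ γ := norm_sub_le_mul_agmonLength hρ.1 hγ hint hT hc.le hρc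
    _ < c * s := by gcongr
    _ = B₀ * s * (1 + R) ^ (k₀ / (k₀ + 1)) * ρ z := by ring
    _ ≤ R * ρ z := mul_le_mul_of_nonneg_right
          (mul_rpow_one_add_exitRadius_le hB₀.le hk₀ hs0) (hρ.1 z).le
  exact lt_irrefl _ this

end CriticalRadius

section Volume

variable {d : ℕ} {ρ : EuclideanSpace ℝ (Fin d) → ℝ} {B₀ k₀ : ℝ} {x z : EuclideanSpace ℝ (Fin d)}

lemma IsCRF.agmonBall_subset_union (hρ : IsCRF ρ B₀ k₀) (hk₀ : 0 ≤ k₀) {r s : ℝ} (hr : 0 < r) :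
    agmonBall ρ z s ⊆ agmonBall ρ z r ∪ closedBall z (exitRadius B₀ k₀ s * ρ z) := by
  intro y hy
  obtain ⟨γ, hγ, h0, h1, hs⟩ := exists_agmonLength_lt hy
  by_cases hint : IntervalIntegrable (fun t => (ρ (γ t))⁻¹ * ‖deriv γ t‖) volume 0 1
  · right
    rw [mem_closedBall, dist_eq_norm, ← h1]
    exact hρ.norm_sub_le_of_agmonLength_lt hk₀ hγ h0 hint hs
  · -- the length of `γ` is the junk value `0` of a non-integrable Bochner integral
    left
    have := agmonDist_le_agmonLength hρ.nonneg hγ h0 h1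
    rw [agmonLength, intervalIntegral.integral_undef hint] at this
    exact this.trans_lt hr

lemma IsCRF.volume_agmonBall_le (hρ : IsCRF ρ B₀ k₀) (hk₀ : 0 ≤ k₀) {r : ℝ} (hr : 0 < r)
    (hzx : agmonDist ρ z x < r) :
    volume (agmonBall ρ x (2 * r)) ≤
      (1 + ENNReal.ofReal ((exitRadius B₀ k₀ (3 * r) / innerRadius B₀ k₀ r) ^ d)) *
        volume (agmonBall ρ z r) := by
  set R := exitRadius B₀ k₀ (3 * r)
  set δ := innerRadius B₀ k₀ r
  have hB₀ : 0 < B₀ := zero_lt_one.trans_le hρ.one_le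
  have hR : 0 ≤ R := exitRadius_nonneg hB₀.le hk₀ (by positivity)
  have hδ : 0 < δ := innerRadius_pos hB₀ hr
  have hsub : agmonBall ρ x (2 * r) ⊆ agmonBall ρ z r ∪ closedBall z (R * ρ z) :=
    (agmonBall_subset_agmonBall hρ.nonneg (by linarith)).trans
      (hρ.agmonBall_subset_union hk₀ hr)
  have hball : volume (closedBall z (R * ρ z)) ≤
      ENNReal.ofReal ((R / δ) ^ d) * volume (agmonBall ρ z r) := by
    rw [show R * ρ z = R / δ * (δ * ρ z) by field_simp,
      Measure.addHaar_closedBall_mul volume z (by positivity) (by have := hρ.1 z; positivity),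
      ← Measure.addHaar_closedBall_center volume z, finrank_euclideanSpace_fin]
    gcongr
    exact hρ.closedBall_subset_agmonBall hk₀ hr
  calc volume (agmonBall ρ x (2 * r))
      ≤ volume (agmonBall ρ z r) + volume (closedBall z (R * ρ z)) :=
        (measure_mono hsub).trans (measure_union_le _ _)
    _ ≤ volume (agmonBall ρ z r) + ENNReal.ofReal ((R / δ) ^ d) * volume (agmonBall ρ z r) := by
        gcongr
    _ = _ := by ring

lemma IsCRF.exists_volume_agmonBall_le (hρ : IsCRF ρ B₀ k₀) (hk₀ : 0 ≤ k₀) {ε : ℝ} (hε : 0 < ε) :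
    ∃ C > 0, ∀ x z : EuclideanSpace ℝ (Fin d), ∀ r > 0, agmonDist ρ z x < r →
      volume (agmonBall ρ x (2 * r)) ≤
        ENNReal.ofReal (C * Real.exp (ε * r)) * volume (agmonBall ρ z r) := by
  set K := (k₀ + 1) * (3 * B₀) * (1 + 3 * B₀) ^ k₀ * (2 * (B₀ * 2 ^ k₀))
  set M := (k₀ + 1) * d
  have hB₀ := hρ.one_le
  refine ⟨1 + K ^ d * ((M / ε) ^ M * Real.exp ε), by positivity, fun x z r hr hzx => ?_⟩
  refine (hρ.volume_agmonBall_le hk₀ hr hzx).trans (mul_le_mul_left ?_ _)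
  have hratio : 0 ≤ exitRadius B₀ k₀ (3 * r) / innerRadius B₀ k₀ r :=
    div_nonneg (exitRadius_nonneg (by linarith) hk₀ (by positivity))
      (innerRadius_pos (by linarith) hr).le
  have hpoly : (exitRadius B₀ k₀ (3 * r) / innerRadius B₀ k₀ r) ^ d ≤
      K ^ d * ((M / ε) ^ M * Real.exp ε) * Real.exp (ε * r) :=
    calc _ ≤ (K * (1 + r) ^ (k₀ + 1)) ^ d :=
          pow_le_pow_left₀ hratio (exitRadius_div_innerRadius_le hB₀ hk₀ hr) d
      _ = K ^ d * (1 + r) ^ M := by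
          rw [mul_pow, ← Real.rpow_natCast ((1 + r) ^ (k₀ + 1)), ← Real.rpow_mul (by positivity)]
      _ ≤ K ^ d * ((M / ε) ^ M * Real.exp (ε * (1 + r))) := by
          gcongr; exact rpow_le_mul_exp (by positivity) hε (by positivity)
      _ = K ^ d * ((M / ε) ^ M * Real.exp ε) * Real.exp (ε * r) := by
          rw [mul_add, mul_one, Real.exp_add]; ring
  have hexp : 1 ≤ Real.exp (ε * r) := Real.one_le_exp (by positivity)
  rw [← ENNReal.ofReal_one, ← ENNReal.ofReal_add zero_le_one (by positivity)]
  exact ENNReal.ofReal_le_ofReal (by nlinarith)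

end Volume

lemma aMaxUnc_le_mul_aMax {d : ℕ} {ρ : EuclideanSpace ℝ (Fin d) → ℝ} (hρ : 0 ≤ ρ) {c₁ c₂ C : ℝ}
    (hC : 0 < C) (hvol : ∀ x z : EuclideanSpace ℝ (Fin d), ∀ r > 0, agmonDist ρ z x < r →
      volume (agmonBall ρ x (2 * r)) * ENNReal.ofReal (Real.exp (c₂ * (2 * r))) ≤
        ENNReal.ofReal C * (volume (agmonBall ρ z r) * ENNReal.ofReal (Real.exp (c₁ * r))))
    (f : EuclideanSpace ℝ (Fin d) → ℝ) (x : EuclideanSpace ℝ (Fin d)) :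
    aMaxUnc ρ c₁ f x ≤ ENNReal.ofReal C * aMax ρ c₂ f x := by
  refine iSup_le fun z => iSup₂_le fun r hr => iSup_le fun hzx => ?_
  have hsub : agmonBall ρ z r ⊆ agmonBall ρ x (2 * r) :=
    agmonBall_subset_agmonBall hρ (by rw [agmonDist_comm hρ]; linarith)
  have hC₀ : ENNReal.ofReal C ≠ 0 := ENNReal.ofReal_pos.2 hC |>.ne'
  calc (∫⁻ y in agmonBall ρ z r, ENNReal.ofReal |f y|) /
        (volume (agmonBall ρ z r) * ENNReal.ofReal (Real.exp (c₁ * r)))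
      ≤ ENNReal.ofReal C * (∫⁻ y in agmonBall ρ x (2 * r), ENNReal.ofReal |f y|) /
        (ENNReal.ofReal C * (volume (agmonBall ρ z r) * ENNReal.ofReal (Real.exp (c₁ * r)))) := by
        rw [ENNReal.mul_div_mul_left _ _ hC₀ ENNReal.ofReal_ne_top]
        gcongr
    _ ≤ ENNReal.ofReal C * (∫⁻ y in agmonBall ρ x (2 * r), ENNReal.ofReal |f y|) /
        (volume (agmonBall ρ x (2 * r)) * ENNReal.ofReal (Real.exp (c₂ * (2 * r)))) :=
        ENNReal.div_le_div_left (hvol x z r hr hzx) _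
    _ ≤ ENNReal.ofReal C * aMax ρ c₂ f x := by
        rw [mul_div_assoc]
        gcongr
        exact le_iSup₂_of_le (2 * r) (by linarith) le_rfl

theorem stmt9_general {d : ℕ} (ρ : EuclideanSpace ℝ (Fin d) → ℝ) (B₀ k₀ : ℝ)
    (hk₀ : 1 < k₀) (hρ : IsCRF ρ B₀ k₀)
    (c₁ c₂ : ℝ) (hc : 2 * c₂ < c₁) :
    ∃ C : ℝ, 0 < C ∧ ∀ (f : EuclideanSpace ℝ (Fin d) → ℝ) (x : EuclideanSpace ℝ (Fin d)),
      aMaxUnc ρ c₁ f x ≤ ENNReal.ofReal C * aMax ρ c₂ f x := by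
  obtain ⟨C, hC, hvol⟩ := hρ.exists_volume_agmonBall_le (by linarith) (sub_pos.2 hc)
  refine ⟨C, hC, aMaxUnc_le_mul_aMax hρ.nonneg hC fun x z r hr hzx => ?_⟩
  calc volume (agmonBall ρ x (2 * r)) * ENNReal.ofReal (Real.exp (c₂ * (2 * r)))
      ≤ ENNReal.ofReal (C * Real.exp ((c₁ - 2 * c₂) * r)) * volume (agmonBall ρ z r) *
          ENNReal.ofReal (Real.exp (c₂ * (2 * r))) := by gcongr; exact hvol x z r hr hzx
    _ = ENNReal.ofReal C * (volume (agmonBall ρ z r) *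
          ENNReal.ofReal (Real.exp ((c₁ - 2 * c₂) * r) * Real.exp (c₂ * (2 * r)))) := by
        rw [ENNReal.ofReal_mul hC.le, ENNReal.ofReal_mul (Real.exp_pos _).le]; ring
    _ = ENNReal.ofReal C * (volume (agmonBall ρ z r) * ENNReal.ofReal (Real.exp (c₁ * r))) := by
        rw [← Real.exp_add]; ring_nf

theorem stmt9 {d : ℕ} (ρ : EuclideanSpace ℝ (Fin d) → ℝ) (B₀ k₀ : ℝ)
    (hB₀ : 1 < B₀) (hk₀ : 1 < k₀) (hρ : IsCRF ρ B₀ k₀)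
    (c₁ c₂ : ℝ) (hc₂ : 0 < c₂) (hc : 2 * c₂ < c₁) :
    ∃ C : ℝ, 0 < C ∧ ∀ (f : EuclideanSpace ℝ (Fin d) → ℝ) (x : EuclideanSpace ℝ (Fin d)),
      aMaxUnc ρ c₁ f x ≤ ENNReal.ofReal C * aMax ρ c₂ f x :=
  stmt9_general ρ B₀ k₀ hk₀ hρ c₁ c₂ hc
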